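/- arXiv:gr-qc/0512070 — 4 statements merged into one kernel-verified Lean document; each statement's English description precedes it below -/
import Mathlib

section
/- (Cosmic no-hair) Let 0 < γ < 2/3. Then every type VIII solution of the tilted Bianchi type VIII dynamical system defined on [τ₀, ∞) with Ω(τ) > 0 and V(τ)² < 1 for all τ satisfies Ω(τ) → 1 and V(τ) → 0 as τ → ∞. -/
noncomputable section

open Complex Filter

/-- State of the tilted Bianchi type VIII dynamical system (F-gauge):
real variables `Sp`, `Nb` (= N̄), `N1`, `Om`, `v1` and complex variables
`Sx` (= Σ×), `S1`, `Nx` (= N×), `v`, all functions of the dynamical time τ. -/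
structure BianchiVIII (γ : ℝ) (I : Set ℝ) where
  Sp : ℝ → ℝ
  Sx : ℝ → ℂ
  S1 : ℝ → ℂ
  Nx : ℝ → ℂ
  Nb : ℝ → ℝ
  N1 : ℝ → ℝ
  Om : ℝ → ℝ
  v1 : ℝ → ℝ
  v : ℝ → ℂ

namespace BianchiVIII

variable {γ : ℝ} {I : Set ℝ}

/-- Σ² = Σ₊² + |Σ×|² + |Σ₁|² -/
def Sig2 (S : BianchiVIII γ I) (τ : ℝ) : ℝ :=
  S.Sp τ ^ 2 + ‖S.Sx τ‖ ^ 2 + ‖S.S1 τ‖ ^ 2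

/-- V² = v₁² + |v|² -/
def V2 (S : BianchiVIII γ I) (τ : ℝ) : ℝ :=
  S.v1 τ ^ 2 + ‖S.v τ‖ ^ 2

/-- The tilt speed V = √(V²). -/
def V (S : BianchiVIII γ I) (τ : ℝ) : ℝ := Real.sqrt (S.V2 τ)

/-- G₊ = 1 + (γ−1)V² -/
def Gp (S : BianchiVIII γ I) (τ : ℝ) : ℝ := 1 + (γ - 1) * S.V2 τ

/-- Deceleration parameter q = 2Σ² + (1/2)((3γ−2)+(2−γ)V²)Om/G₊ -/
def q (S : BianchiVIII γ I) (τ : ℝ) : ℝ :=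
  2 * S.Sig2 τ + (1/2) * ((3*γ - 2) + (2 - γ) * S.V2 τ) * S.Om τ / S.Gp τ

/-- W = V²𝒮 = Σ₊(−2v₁² + |v|²) + 2√3 v₁ Re(conj(Σ₁) v) + √3 Re(Σ× conj(v)²) -/
def W (S : BianchiVIII γ I) (τ : ℝ) : ℝ :=
  S.Sp τ * (-2 * S.v1 τ ^ 2 + ‖S.v τ‖ ^ 2)
    + 2 * Real.sqrt 3 * S.v1 τ * ((starRingEnd ℂ) (S.S1 τ) * S.v τ).re
    + Real.sqrt 3 * (S.Sx τ * ((starRingEnd ℂ) (S.v τ)) ^ 2).re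

/-- T = ((3γ−4)(1−V²) + (2−γ)W)/(1−(γ−1)V²) -/
def T (S : BianchiVIII γ I) (τ : ℝ) : ℝ :=
  ((3*γ - 4) * (1 - S.V2 τ) + (2 - γ) * S.W τ) / (1 - (γ - 1) * S.V2 τ)

/-- a = (N̄²−N₁²−|N×|²)/((N̄−N₁)²−|N×|²) -/
def a (S : BianchiVIII γ I) (τ : ℝ) : ℝ :=
  (S.Nb τ ^ 2 - S.N1 τ ^ 2 - ‖S.Nx τ‖ ^ 2) /
    ((S.Nb τ - S.N1 τ) ^ 2 - ‖S.Nx τ‖ ^ 2)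

/-- b = −2N₁N×/((N̄−N₁)²−|N×|²) -/
def b (S : BianchiVIII γ I) (τ : ℝ) : ℂ :=
  ((-2 * S.N1 τ : ℝ) : ℂ) * S.Nx τ /
    (((S.Nb τ - S.N1 τ) ^ 2 - ‖S.Nx τ‖ ^ 2 : ℝ) : ℂ)

/-- R = aΣ₁ + b·conj(Σ₁) -/
def R (S : BianchiVIII γ I) (τ : ℝ) : ℂ :=
  (S.a τ : ℂ) * S.S1 τ + S.b τ * (starRingEnd ℂ) (S.S1 τ)

/-- The evolution equations and the constraints of the tilted Bianchi
type VIII dynamical system, holding at each τ in the interval `I`. -/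
structure IsSolution (S : BianchiVIII γ I) : Prop where
  hSp : ∀ τ ∈ I, HasDerivAt S.Sp
    ((S.q τ - 2) * S.Sp τ + 3 * ((starRingEnd ℂ) (S.R τ) * S.S1 τ).re
      - S.N1 τ * S.Nb τ - 2 * ‖S.Nx τ‖ ^ 2
      + γ * S.Om τ / (2 * S.Gp τ) * (-2 * S.v1 τ ^ 2 + ‖S.v τ‖ ^ 2)) τ
  hSx : ∀ τ ∈ I, HasDerivAt S.Sx
    (((S.q τ - 2 : ℝ) : ℂ) * S.Sx τ + (Real.sqrt 3 : ℂ) * S.S1 τ * S.R τ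
      - (Real.sqrt 3 : ℂ) * S.Nx τ * ((2 * S.Nb τ - S.N1 τ : ℝ) : ℂ)
      + ((Real.sqrt 3 * γ * S.Om τ / (2 * S.Gp τ) : ℝ) : ℂ) * (S.v τ) ^ 2) τ
  hS1 : ∀ τ ∈ I, HasDerivAt S.S1
    (((S.q τ - 2 : ℝ) : ℂ) * S.S1 τ - ((3 * S.Sp τ : ℝ) : ℂ) * S.R τ
      - (Real.sqrt 3 : ℂ) * S.Sx τ * (starRingEnd ℂ) (S.R τ)
      + ((Real.sqrt 3 * γ * S.Om τ * S.v1 τ / S.Gp τ : ℝ) : ℂ) * S.v τ) τ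
  hNx : ∀ τ ∈ I, HasDerivAt S.Nx
    (((S.q τ + 2 * S.Sp τ : ℝ) : ℂ) * S.Nx τ
      + ((2 * Real.sqrt 3 : ℝ) : ℂ) * S.Sx τ * ((S.Nb τ : ℝ) : ℂ)) τ
  hNb : ∀ τ ∈ I, HasDerivAt S.Nb
    ((S.q τ + 2 * S.Sp τ) * S.Nb τ
      + 2 * Real.sqrt 3 * ((starRingEnd ℂ) (S.Sx τ) * S.Nx τ).re) τ
  hN1 : ∀ τ ∈ I, HasDerivAt S.N1 ((S.q τ - 4 * S.Sp τ) * S.N1 τ) τ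
  hOm : ∀ τ ∈ I, HasDerivAt S.Om
    (S.Om τ / S.Gp τ * (2 * S.q τ - (3*γ - 2)
      + (2 * S.q τ * (γ - 1) - (2 - γ)) * S.V2 τ - γ * S.W τ)) τ
  hv1 : ∀ τ ∈ I, HasDerivAt S.v1
    ((S.T τ + 2 * S.Sp τ) * S.v1 τ
      - Real.sqrt 3 * ((S.R τ + S.S1 τ) * (starRingEnd ℂ) (S.v τ)).re
      + Real.sqrt 3 * ((starRingEnd ℂ) (S.Nx τ) * (S.v τ) ^ 2).im) τ
  hv : ∀ τ ∈ I, HasDerivAt S.v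
    ((((S.T τ - S.Sp τ : ℝ) : ℂ)
        - Complex.I * (Real.sqrt 3 : ℂ) * ((S.Nb τ - S.N1 τ : ℝ) : ℂ) * (S.v1 τ : ℂ)) * S.v τ
      - (Real.sqrt 3 : ℂ) * (S.Sx τ + Complex.I * S.Nx τ * (S.v1 τ : ℂ)) * (starRingEnd ℂ) (S.v τ)
      - (Real.sqrt 3 : ℂ) * (S.S1 τ - S.R τ) * (S.v1 τ : ℂ)) τ
  hC1 : ∀ τ ∈ I, 1 = S.Sig2 τ + (1/4) * S.N1 τ ^ 2 - S.N1 τ * S.Nb τ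
      + ‖S.Nx τ‖ ^ 2 + S.Om τ
  hC2 : ∀ τ ∈ I, 0 = 2 * ((starRingEnd ℂ) (S.Sx τ) * S.Nx τ).im
      + γ * S.Om τ * S.v1 τ / S.Gp τ
  hC3 : ∀ τ ∈ I, (0 : ℂ) = Complex.I * S.S1 τ * ((S.Nb τ - S.N1 τ : ℝ) : ℂ)
      + Complex.I * (starRingEnd ℂ) (S.S1 τ) * S.Nx τ
      + ((γ * S.Om τ / S.Gp τ : ℝ) : ℂ) * S.v τ

/-- Type VIII conditions: N₁ < 0, N̄ > 0, N̄² − |N×|² > 0, Om ≥ 0, V² < 1. -/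
def IsTypeVIII (S : BianchiVIII γ I) : Prop :=
  ∀ τ ∈ I, S.N1 τ < 0 ∧ 0 < S.Nb τ ∧ 0 < S.Nb τ ^ 2 - ‖S.Nx τ‖ ^ 2
    ∧ 0 ≤ S.Om τ ∧ S.V2 τ < 1

/-- D = N₁v₁² + N̄|v|² + Re(conj(N×) v²) -/
def D (S : BianchiVIII γ I) (τ : ℝ) : ℝ :=
  S.N1 τ * S.v1 τ ^ 2 + S.Nb τ * ‖S.v τ‖ ^ 2
    + ((starRingEnd ℂ) (S.Nx τ) * (S.v τ) ^ 2).re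

end BianchiVIII

/-!
For type VIII the curvature terms of the Hamiltonian constraint are nonnegative, so `Σ² + Ω ≤ 1`,
and Cauchy–Schwarz for the shear gives `|W| ≤ 2 √(Σ²) V² ≤ 2 V²`. Hence
`(V²)' ≤ -(2 - 3γ)(1 - V²) V² ≤ 0`: `V²` is nonincreasing, so `1 - V² ≥ 1 - V²(τ₀)`, and `V²`
decays exponentially. For the matter, `(log Ω)' ≥ (2 - 3γ)(1 - Ω) - C V²` with `C = (2 + γ)/γ`;
as `V²` is integrable this keeps `Ω ≥ m > 0`, after which `1 - Ω + k V²`, for `k` large, obeys a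
linear decay inequality.
-/

open Set

theorem le_mul_exp_of_hasDerivAt_le {f f' : ℝ → ℝ} {a K : ℝ}
    (hf : ∀ x ∈ Ici a, HasDerivAt f (f' x) x) (bound : ∀ x ∈ Ici a, f' x ≤ K * f x) :
    ∀ x ∈ Ici a, f x ≤ f a * Real.exp (K * (x - a)) := by
  intro x hx
  have hsub : Icc a x ⊆ Ici a := Icc_subset_Ici_self
  have hsub' : Ico a x ⊆ Ici a := Ico_subset_Icc_self.trans hsub
  simpa [gronwallBound_ε0] using le_gronwallBound_of_liminf_deriv_right_le (ε := 0)
    (fun y hy => (hf y (hsub hy)).continuousAt.continuousWithinAt)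
    (fun y hy _ hr => (hf y (hsub' hy)).hasDerivWithinAt.liminf_right_slope_le hr)
    le_rfl (fun y hy => by simpa using bound y (hsub' hy)) x ⟨hx, le_rfl⟩

theorem antitoneOn_Ici_of_hasDerivAt_nonpos {f f' : ℝ → ℝ} {a : ℝ}
    (hf : ∀ x ∈ Ici a, HasDerivAt f (f' x) x) (hf' : ∀ x ∈ Ici a, f' x ≤ 0) :
    AntitoneOn f (Ici a) := fun x hx y _ hxy => by
  simpa using le_mul_exp_of_hasDerivAt_le (K := 0) (fun z hz => hf z (Ici_subset_Ici.mpr hx hz))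
    (fun z hz => by simpa using hf' z (Ici_subset_Ici.mpr hx hz)) y hxy

theorem tendsto_zero_of_hasDerivAt_le_neg_mul {f f' : ℝ → ℝ} {a c : ℝ} (hc : 0 < c)
    (hf : ∀ x ∈ Ici a, HasDerivAt f (f' x) x) (bound : ∀ x ∈ Ici a, f' x ≤ -c * f x)
    (hf0 : ∀ x ∈ Ici a, 0 ≤ f x) : Tendsto f atTop (nhds 0) := by
  have hlin : Tendsto (fun x => -c * (x - a)) atTop atBot :=
    (tendsto_atTop_add_const_right _ (-a) tendsto_id).const_mul_atTop_of_neg (neg_neg_of_pos hc)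
  have hexp : Tendsto (fun x => f a * Real.exp (-c * (x - a))) atTop (nhds 0) := by
    simpa using (Real.tendsto_exp_atBot.comp hlin).const_mul (f a)
  exact squeeze_zero' ((eventually_ge_atTop a).mono hf0)
    ((eventually_ge_atTop a).mono (le_mul_exp_of_hasDerivAt_le hf bound)) hexp

/-- `σ` is the trace-free shear matrix and the left-hand side is
`σ(u, u) = ⟪σ, u uᵀ - (|u|²/3) I⟫`; Cauchy–Schwarz for the Frobenius product, with `‖σ‖² = 6 Σ²`
and `‖u uᵀ - (|u|²/3) I‖² = 2|u|⁴/3`, gives the sharp constant. -/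
theorem shear_sq_le (p s1r s1i sxr sxi v1 x y : ℝ) :
    (p * (-2 * v1 ^ 2 + (x ^ 2 + y ^ 2)) + 2 * √3 * v1 * (s1r * x + s1i * y)
      + √3 * (sxr * (x ^ 2 - y ^ 2) + sxi * (2 * (x * y)))) ^ 2
    ≤ 4 * (p ^ 2 + (s1r ^ 2 + s1i ^ 2) + (sxr ^ 2 + sxi ^ 2))
      * (v1 ^ 2 + (x ^ 2 + y ^ 2)) ^ 2 := by
  let σ : Fin 3 → Fin 3 → ℝ :=
    ![![-2 * p, √3 * s1r, √3 * s1i], ![√3 * s1r, p + √3 * sxr, √3 * sxi],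
      ![√3 * s1i, √3 * sxi, p - √3 * sxr]]
  let u : Fin 3 → ℝ := ![v1, x, y]
  let V2 := v1 ^ 2 + (x ^ 2 + y ^ 2)
  have cs := Finset.sum_mul_sq_le_sq_mul_sq Finset.univ (fun ij : Fin 3 × Fin 3 => σ ij.1 ij.2)
    (fun ij => u ij.1 * u ij.2 - if ij.1 = ij.2 then V2 / 3 else 0)
  simp only [← Finset.univ_product_univ, Finset.sum_product, Fin.sum_univ_three] at cs
  simp only [Matrix.cons_val', Matrix.cons_val_zero, Matrix.cons_val_fin_one, Matrix.cons_val_one,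
    Matrix.cons_val, Fin.isValue, Fin.reduceEq, ↓reduceIte, zero_ne_one, one_ne_zero, sub_zero,
    σ, u, V2] at cs
  refine le_of_eq_of_le (by ring) (cs.trans_eq ?_)
  linear_combination (4 / 3) * (s1r ^ 2 + s1i ^ 2 + sxr ^ 2 + sxi ^ 2) * V2 ^ 2
    * Real.sq_sqrt (show (0 : ℝ) ≤ 3 by norm_num)

namespace BianchiVIII

variable {γ : ℝ} {I : Set ℝ}

def logDerivOm (S : BianchiVIII γ I) (τ : ℝ) : ℝ :=
  (4 * S.Sig2 τ * S.Gp τ - ((3 * γ - 2) + (2 - γ) * S.V2 τ) * (1 - S.Om τ) - γ * S.W τ)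
    / S.Gp τ

section Pointwise

variable (S : BianchiVIII γ I)

lemma V2_nonneg (τ : ℝ) : 0 ≤ S.V2 τ := by
  unfold V2; positivity

lemma Sig2_nonneg (τ : ℝ) : 0 ≤ S.Sig2 τ := by
  unfold Sig2; positivity

lemma sq_W_le (τ : ℝ) : S.W τ ^ 2 ≤ 4 * S.Sig2 τ * S.V2 τ ^ 2 := by
  convert shear_sq_le (S.Sp τ) (S.S1 τ).re (S.S1 τ).im (S.Sx τ).re (S.Sx τ).im (S.v1 τ)
    (S.v τ).re (S.v τ).im using 2
  · simp only [W, Complex.sq_norm, Complex.normSq_apply]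
    simp only [Complex.mul_re, Complex.mul_im, Complex.conj_re, Complex.conj_im, sq]
    ring
  · simp only [Sig2, Complex.sq_norm, Complex.normSq_apply]
    ring
  · simp only [V2, Complex.sq_norm, Complex.normSq_apply]
    ring

lemma abs_W_le {τ : ℝ} (hS : S.Sig2 τ ≤ 1) : |S.W τ| ≤ 2 * S.V2 τ := by
  refine abs_le_of_sq_le_sq ((S.sq_W_le τ).trans ?_) (by linarith [S.V2_nonneg τ])
  nlinarith [S.Sig2_nonneg τ, sq_nonneg (S.V2 τ)]

lemma T_mul_V2_sub_W {τ : ℝ} (hG : 1 - (γ - 1) * S.V2 τ ≠ 0) :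
    S.T τ * S.V2 τ - S.W τ
      = (1 - S.V2 τ) * ((3 * γ - 4) * S.V2 τ - S.W τ) / (1 - (γ - 1) * S.V2 τ) := by
  rw [T, div_mul_eq_mul_div, eq_div_iff hG, sub_mul, div_mul_cancel₀ _ hG]
  ring

end Pointwise

variable {S : BianchiVIII γ I} {τ : ℝ}

lemma Sig2_add_Om_le_one (hsol : S.IsSolution) (hVIII : S.IsTypeVIII) (hτ : τ ∈ I) :
    S.Sig2 τ + S.Om τ ≤ 1 := by
  obtain ⟨hN1, hNb, -⟩ := hVIII τ hτ
  nlinarith [hsol.hC1 τ hτ, sq_nonneg (S.N1 τ), sq_nonneg ‖S.Nx τ‖,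
    mul_pos (neg_pos.mpr hN1) hNb]

lemma one_sub_Om_nonneg (hsol : S.IsSolution) (hVIII : S.IsTypeVIII) (hτ : τ ∈ I) :
    0 ≤ 1 - S.Om τ := by
  linarith [Sig2_add_Om_le_one hsol hVIII hτ, S.Sig2_nonneg τ]

lemma Gp_pos (hγ0 : 0 < γ) (hVIII : S.IsTypeVIII) (hτ : τ ∈ I) : 0 < S.Gp τ := by
  have hV1 := (hVIII τ hτ).2.2.2.2
  rw [Gp]
  nlinarith [S.V2_nonneg τ]

lemma hasDerivAt_V2 (hsol : S.IsSolution) (hτ : τ ∈ I) :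
    HasDerivAt S.V2 (2 * (S.T τ * S.V2 τ - S.W τ)) τ := by
  refine (((hsol.hv1 τ hτ).pow 2).add (hsol.hv τ hτ).norm_sq).congr_deriv ?_
  simp only [Complex.inner, W, V2, Complex.sq_norm, Complex.normSq_apply]
  simp only [Complex.mul_re, Complex.mul_im, Complex.add_re, Complex.add_im, Complex.sub_re,
    Complex.sub_im, Complex.conj_re, Complex.conj_im, Complex.I_re, Complex.I_im,
    Complex.ofReal_re, Complex.ofReal_im, sq]
  ring

lemma hasDerivAt_Om (hsol : S.IsSolution) (hτ : τ ∈ I) (hG : S.Gp τ ≠ 0) :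
    HasDerivAt S.Om (S.Om τ * S.logDerivOm τ) τ := by
  refine (hsol.hOm τ hτ).congr_deriv ?_
  rw [logDerivOm, q]
  field_simp
  rw [Gp]
  ring

lemma V2_rate_le (hγ0 : 0 < γ) (hγ1 : γ < 2 / 3) (hsol : S.IsSolution) (hVIII : S.IsTypeVIII)
    (hτ : τ ∈ I) :
    2 * (S.T τ * S.V2 τ - S.W τ) ≤ -(2 - 3 * γ) * (1 - S.V2 τ) * S.V2 τ := by
  obtain ⟨-, -, -, hOm0, hV1⟩ := hVIII τ hτ
  have hV0 := S.V2_nonneg τ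
  have hW := (abs_le.mp (S.abs_W_le (by linarith [Sig2_add_Om_le_one hsol hVIII hτ]))).1
  have hH1 : 1 ≤ 1 - (γ - 1) * S.V2 τ := by nlinarith
  have hH2 : 1 - (γ - 1) * S.V2 τ ≤ 2 := by nlinarith
  have hM : (3 * γ - 4) * S.V2 τ - S.W τ ≤ -(2 - 3 * γ) * S.V2 τ := by linarith
  rw [S.T_mul_V2_sub_W (by linarith), ← mul_div_assoc, div_le_iff₀ (by linarith)]
  nlinarith [mul_le_mul_of_nonneg_left hM (by linarith : (0 : ℝ) ≤ 2 * (1 - S.V2 τ)),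
    mul_nonneg (mul_nonneg (sub_nonneg.mpr hH2) (by linarith : (0 : ℝ) ≤ 1 - S.V2 τ))
      (mul_nonneg (by linarith : (0 : ℝ) ≤ 2 - 3 * γ) hV0)]

lemma le_logDerivOm (hγ0 : 0 < γ) (hγ1 : γ < 2 / 3) (hsol : S.IsSolution)
    (hVIII : S.IsTypeVIII) (hτ : τ ∈ I) :
    (2 - 3 * γ) * (1 - S.Om τ) - (2 + γ) / γ * S.V2 τ ≤ S.logDerivOm τ := by
  obtain ⟨-, -, -, hOm0, hV1⟩ := hVIII τ hτ
  have hV0 := S.V2_nonneg τ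
  have hX := one_sub_Om_nonneg hsol hVIII hτ
  have hW := (abs_le.mp (S.abs_W_le (by linarith [Sig2_add_Om_le_one hsol hVIII hτ]))).2
  have hGγ : γ ≤ S.Gp τ := by rw [Gp]; nlinarith
  have hG1 : S.Gp τ ≤ 1 := by rw [Gp]; nlinarith
  have hnum : (2 - 3 * γ) * (1 - S.Om τ) - (2 + γ) * S.V2 τ ≤ 4 * S.Sig2 τ * S.Gp τ
      - ((3 * γ - 2) + (2 - γ) * S.V2 τ) * (1 - S.Om τ) - γ * S.W τ := by
    nlinarith [mul_nonneg (S.Sig2_nonneg τ) (by linarith : (0 : ℝ) ≤ S.Gp τ),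
      mul_nonneg (by linarith : (0 : ℝ) ≤ 2 - γ) (mul_nonneg hV0 hOm0)]
  have hC : 2 + γ ≤ (2 + γ) / γ * S.Gp τ := by
    rw [div_mul_eq_mul_div, le_div_iff₀ hγ0]
    nlinarith
  rw [logDerivOm, le_div_iff₀ (by linarith)]
  nlinarith [mul_nonneg (mul_nonneg (by linarith : (0 : ℝ) ≤ 2 - 3 * γ) hX) (sub_nonneg.mpr hG1),
    mul_le_mul_of_nonneg_right hC hV0]

lemma neg_Om_mul_logDerivOm_le (hγ0 : 0 < γ) (hγ1 : γ < 2 / 3) (hsol : S.IsSolution)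
    (hVIII : S.IsTypeVIII) (hτ : τ ∈ I) {m : ℝ} (hm : m ≤ S.Om τ) :
    -(S.Om τ * S.logDerivOm τ)
      ≤ -(m * (2 - 3 * γ)) * (1 - S.Om τ) + (2 + γ) / γ * S.V2 τ := by
  obtain ⟨-, -, -, hOm0, -⟩ := hVIII τ hτ
  have hX := one_sub_Om_nonneg hsol hVIII hτ
  nlinarith [mul_le_mul_of_nonneg_left (le_logDerivOm hγ0 hγ1 hsol hVIII hτ) hOm0,
    mul_le_mul_of_nonneg_right hm (mul_nonneg (by linarith : (0 : ℝ) ≤ 2 - 3 * γ) hX),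
    mul_nonneg (by positivity : (0 : ℝ) ≤ (2 + γ) / γ) (mul_nonneg (S.V2_nonneg τ) hX)]

section Asymptotics

variable {τ₀ : ℝ} {S : BianchiVIII γ (Ici τ₀)}

def tiltDecayRate (S : BianchiVIII γ (Ici τ₀)) : ℝ := (2 - 3 * γ) * (1 - S.V2 τ₀)

lemma tiltDecayRate_pos (hγ1 : γ < 2 / 3) (hVIII : S.IsTypeVIII) : 0 < S.tiltDecayRate :=
  mul_pos (by linarith) (by linarith [(hVIII τ₀ self_mem_Ici).2.2.2.2])

lemma antitoneOn_V2 (hγ0 : 0 < γ) (hγ1 : γ < 2 / 3) (hsol : S.IsSolution)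
    (hVIII : S.IsTypeVIII) : AntitoneOn S.V2 (Ici τ₀) :=
  antitoneOn_Ici_of_hasDerivAt_nonpos (fun _ hτ => hasDerivAt_V2 hsol hτ) fun τ hτ => by
    have hV1 := (hVIII τ hτ).2.2.2.2
    nlinarith [V2_rate_le hγ0 hγ1 hsol hVIII hτ, mul_nonneg (mul_nonneg
      (by linarith : (0 : ℝ) ≤ 2 - 3 * γ) (by linarith : 0 ≤ 1 - S.V2 τ)) (S.V2_nonneg τ)]

lemma V2_rate_le_tiltDecayRate (hγ0 : 0 < γ) (hγ1 : γ < 2 / 3) (hsol : S.IsSolution)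
    (hVIII : S.IsTypeVIII) (hτ : τ ∈ Ici τ₀) :
    2 * (S.T τ * S.V2 τ - S.W τ) ≤ -S.tiltDecayRate * S.V2 τ := by
  have hmono := antitoneOn_V2 hγ0 hγ1 hsol hVIII self_mem_Ici hτ hτ
  rw [tiltDecayRate]
  nlinarith [V2_rate_le hγ0 hγ1 hsol hVIII hτ, mul_nonneg (mul_nonneg
    (by linarith : (0 : ℝ) ≤ 2 - 3 * γ) (sub_nonneg.mpr hmono)) (S.V2_nonneg τ)]

lemma tendsto_V2 (hγ0 : 0 < γ) (hγ1 : γ < 2 / 3) (hsol : S.IsSolution)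
    (hVIII : S.IsTypeVIII) : Tendsto S.V2 atTop (nhds 0) :=
  tendsto_zero_of_hasDerivAt_le_neg_mul (tiltDecayRate_pos hγ1 hVIII)
    (fun _ hτ => hasDerivAt_V2 hsol hτ)
    (fun _ hτ => V2_rate_le_tiltDecayRate hγ0 hγ1 hsol hVIII hτ) (fun τ _ => S.V2_nonneg τ)

lemma exists_pos_le_Om (hγ0 : 0 < γ) (hγ1 : γ < 2 / 3) (hsol : S.IsSolution)
    (hVIII : S.IsTypeVIII) (hOm : ∀ τ ∈ Ici τ₀, 0 < S.Om τ) :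
    ∃ m > 0, ∀ τ ∈ Ici τ₀, m ≤ S.Om τ := by
  have ha₀ := tiltDecayRate_pos hγ1 hVIII
  set k := (2 + γ) / γ / S.tiltDecayRate
  have hu (τ) (hτ : τ ∈ Ici τ₀) : HasDerivAt (fun t => k * S.V2 t - Real.log (S.Om t))
      (k * (2 * (S.T τ * S.V2 τ - S.W τ)) - S.logDerivOm τ) τ := by
    refine ((hasDerivAt_V2 hsol hτ).const_mul k).sub
      (((hasDerivAt_Om hsol hτ (Gp_pos hγ0 hVIII hτ).ne').log (hOm τ hτ).ne').congr_deriv ?_)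
    field_simp [(hOm τ hτ).ne']
  -- the choice of `k` makes the decay of `k V²` absorb the `V²` term of `le_logDerivOm`
  have hu_anti : AntitoneOn (fun t => k * S.V2 t - Real.log (S.Om t)) (Ici τ₀) := by
    refine antitoneOn_Ici_of_hasDerivAt_nonpos hu fun τ hτ => ?_
    have hkV2 : k * (2 * (S.T τ * S.V2 τ - S.W τ)) ≤ -((2 + γ) / γ) * S.V2 τ :=
      calc k * (2 * (S.T τ * S.V2 τ - S.W τ)) ≤ k * (-S.tiltDecayRate * S.V2 τ) :=
            mul_le_mul_of_nonneg_left (V2_rate_le_tiltDecayRate hγ0 hγ1 hsol hVIII hτ)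
              (by positivity)
        _ = -((2 + γ) / γ) * S.V2 τ := by simp only [k]; field_simp
    nlinarith [le_logDerivOm hγ0 hγ1 hsol hVIII hτ,
      mul_nonneg (by linarith : (0 : ℝ) ≤ 2 - 3 * γ) (one_sub_Om_nonneg hsol hVIII hτ)]
  refine ⟨Real.exp (Real.log (S.Om τ₀) - k * S.V2 τ₀), Real.exp_pos _, fun τ hτ => ?_⟩
  have hmono := hu_anti self_mem_Ici hτ hτ
  calc Real.exp (Real.log (S.Om τ₀) - k * S.V2 τ₀)
      ≤ Real.exp (Real.log (S.Om τ)) := by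
        gcongr
        nlinarith [S.V2_nonneg τ, (by positivity : 0 ≤ k)]
    _ = S.Om τ := Real.exp_log (hOm τ hτ)

lemma tendsto_one_sub_Om (hγ0 : 0 < γ) (hγ1 : γ < 2 / 3) (hsol : S.IsSolution)
    (hVIII : S.IsTypeVIII) (hOm : ∀ τ ∈ Ici τ₀, 0 < S.Om τ) :
    Tendsto (fun τ => 1 - S.Om τ) atTop (nhds 0) := by
  obtain ⟨m, hm, hmOm⟩ := exists_pos_le_Om hγ0 hγ1 hsol hVIII hOm
  have ha₀ := tiltDecayRate_pos hγ1 hVIII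
  set C := (2 + γ) / γ
  set k := 2 * C / S.tiltDecayRate
  set c := min (m * (2 - 3 * γ)) (S.tiltDecayRate / 2)
  have hc : 0 < c := lt_min (mul_pos hm (by linarith)) (by linarith)
  have hkV2 (τ) : 0 ≤ k * S.V2 τ := mul_nonneg (by positivity) (S.V2_nonneg τ)
  have hY (τ) (hτ : τ ∈ Ici τ₀) : HasDerivAt (fun t => (1 - S.Om t) + k * S.V2 t)
      (-(S.Om τ * S.logDerivOm τ) + k * (2 * (S.T τ * S.V2 τ - S.W τ))) τ :=
    ((hasDerivAt_Om hsol hτ (Gp_pos hγ0 hVIII hτ).ne').const_sub 1).add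
      ((hasDerivAt_V2 hsol hτ).const_mul k)
  have hYrate (τ) (hτ : τ ∈ Ici τ₀) :
      -(S.Om τ * S.logDerivOm τ) + k * (2 * (S.T τ * S.V2 τ - S.W τ))
        ≤ -c * ((1 - S.Om τ) + k * S.V2 τ) := by
    have hV2 : k * (2 * (S.T τ * S.V2 τ - S.W τ)) ≤ -(2 * C) * S.V2 τ :=
      calc k * (2 * (S.T τ * S.V2 τ - S.W τ)) ≤ k * (-S.tiltDecayRate * S.V2 τ) :=
            mul_le_mul_of_nonneg_left (V2_rate_le_tiltDecayRate hγ0 hγ1 hsol hVIII hτ)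
              (by positivity)
        _ = -(2 * C) * S.V2 τ := by simp only [k]; field_simp
    have hck : c * k ≤ C :=
      calc c * k ≤ S.tiltDecayRate / 2 * k :=
            mul_le_mul_of_nonneg_right (min_le_right _ _) (by positivity)
        _ = C := by simp only [k]; field_simp
    have hcm : c * (1 - S.Om τ) ≤ m * (2 - 3 * γ) * (1 - S.Om τ) :=
      mul_le_mul_of_nonneg_right (min_le_left _ _) (one_sub_Om_nonneg hsol hVIII hτ)
    nlinarith [neg_Om_mul_logDerivOm_le hγ0 hγ1 hsol hVIII hτ (hmOm τ hτ),
      mul_le_mul_of_nonneg_right hck (S.V2_nonneg τ)]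
  have hYlim := tendsto_zero_of_hasDerivAt_le_neg_mul hc hY hYrate
    fun τ hτ => add_nonneg (one_sub_Om_nonneg hsol hVIII hτ) (hkV2 τ)
  exact squeeze_zero'
    ((eventually_ge_atTop τ₀).mono fun τ hτ => one_sub_Om_nonneg hsol hVIII hτ)
    ((eventually_ge_atTop τ₀).mono fun τ _ => le_add_of_nonneg_right (hkV2 τ)) hYlim

end Asymptotics

end BianchiVIII

open BianchiVIII in
theorem bianchiVIII_cosmic_no_hair_general (γ : ℝ) (hγ0 : 0 < γ) (hγ1 : γ < 2/3)
    (τ₀ : ℝ) (S : BianchiVIII γ (Set.Ici τ₀))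
    (hsol : S.IsSolution) (hVIII : S.IsTypeVIII)
    (hOm : ∀ τ ∈ Set.Ici τ₀, 0 < S.Om τ) :
    Filter.Tendsto S.Om Filter.atTop (nhds 1) ∧
    Filter.Tendsto S.V Filter.atTop (nhds 0) := by
  constructor
  · simpa using (tendsto_one_sub_Om hγ0 hγ1 hsol hVIII hOm).const_sub 1
  · have hV := (Real.continuous_sqrt.tendsto 0).comp (tendsto_V2 hγ0 hγ1 hsol hVIII)
    rwa [Real.sqrt_zero] at hV

/-- cosmic no-hair: For 0 < γ < 2/3, every type VIII solution
on [τ₀, ∞) with Ω > 0 and V² < 1 satisfies Ω(τ) → 1 and V(τ) → 0 as τ → ∞. -/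
theorem bianchiVIII_cosmic_no_hair (γ : ℝ) (hγ0 : 0 < γ) (hγ1 : γ < 2/3)
    (τ₀ : ℝ) (S : BianchiVIII γ (Set.Ici τ₀))
    (hsol : S.IsSolution) (hVIII : S.IsTypeVIII)
    (hOm : ∀ τ ∈ Set.Ici τ₀, 0 < S.Om τ)
    (hV : ∀ τ ∈ Set.Ici τ₀, S.V2 τ < 1) :
    Filter.Tendsto S.Om Filter.atTop (nhds 1) ∧
    Filter.Tendsto S.V Filter.atTop (nhds 0) :=
  bianchiVIII_cosmic_no_hair_general γ hγ0 hγ1 τ₀ S hsol hVIII hOm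
end
end

section
/- Define Z₂ = N₁²·(N̄² − |N×|²)². Along any solution of the tilted Bianchi type VIII dynamical system, Z₂ is differentiable and satisfies Z₂' = 6q·Z₂. -/
noncomputable section

open Complex Filter

/-- Z₂ = N₁²·(N̄² − |N×|²)². -/
noncomputable def Z2 {γ : ℝ} {I : Set ℝ} (S : BianchiVIII γ I) (τ : ℝ) : ℝ :=
  S.N1 τ ^ 2 * (S.Nb τ ^ 2 - ‖S.Nx τ‖ ^ 2) ^ 2

/-
Both factors of Z₂ evolve by a multiple of themselves: N₁' = (q − 4Σ₊)N₁ and, since the Σ× terms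
cancel between N̄² and |N×|², (N̄² − |N×|²)' = 2(q + 2Σ₊)(N̄² − |N×|²). Hence Z₂'/Z₂ is
2(q − 4Σ₊) + 4(q + 2Σ₊) = 6q, the Σ₊ contributions cancelling.
-/

section ProportionalDeriv

variable {𝕜 𝔸 : Type*} [NontriviallyNormedField 𝕜] [NormedCommRing 𝔸] [NormedAlgebra 𝕜 𝔸]
  {f g : 𝕜 → 𝔸} {a b : 𝔸} {x : 𝕜}

theorem HasDerivAt.fun_mul_of_proportional (hf : HasDerivAt f (a * f x) x)
    (hg : HasDerivAt g (b * g x) x) :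
    HasDerivAt (fun t ↦ f t * g t) ((a + b) * (f x * g x)) x :=
  (hf.fun_mul hg).congr_deriv (by ring)

theorem HasDerivAt.fun_pow_of_proportional (hf : HasDerivAt f (a * f x) x) (n : ℕ) :
    HasDerivAt (fun t ↦ f t ^ n) (n * a * f x ^ n) x := by
  refine (hf.fun_pow n).congr_deriv ?_
  rcases n with _ | n
  · simp
  · push_cast; ring

end ProportionalDeriv

namespace BianchiVIII

variable {γ : ℝ} {I : Set ℝ} {S : BianchiVIII γ I} {τ : ℝ}

theorem IsSolution.hasDerivAt_Nb_sq_sub_norm_Nx_sq (hsol : S.IsSolution) (hτ : τ ∈ I) :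
    HasDerivAt (fun t ↦ S.Nb t ^ 2 - ‖S.Nx t‖ ^ 2)
      (2 * (S.q τ + 2 * S.Sp τ) * (S.Nb τ ^ 2 - ‖S.Nx τ‖ ^ 2)) τ := by
  refine ((hsol.hNb τ hτ).fun_pow 2 |>.fun_sub (hsol.hNx τ hτ).norm_sq).congr_deriv ?_
  have hnorm : ‖S.Nx τ‖ ^ 2 = (S.Nx τ).re ^ 2 + (S.Nx τ).im ^ 2 := by
    rw [Complex.sq_norm, Complex.normSq_apply]; ring
  simp only [Complex.inner, hnorm, Complex.add_re, Complex.add_im, Complex.mul_re, Complex.mul_im,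
    Complex.ofReal_re, Complex.ofReal_im, Complex.conj_re, Complex.conj_im]
  ring

end BianchiVIII

theorem bianchiVIII_Z2_deriv_general (γ : ℝ)
    (I : Set ℝ) (S : BianchiVIII γ I) (hsol : S.IsSolution) :
    ∀ τ ∈ I, HasDerivAt (Z2 S) (6 * S.q τ * Z2 S τ) τ := by
  intro τ hτ
  have hN1_sq : HasDerivAt (fun t ↦ S.N1 t ^ 2) (2 * (S.q τ - 4 * S.Sp τ) * S.N1 τ ^ 2) τ := by
    simpa using (hsol.hN1 τ hτ).fun_pow_of_proportional 2
  have hdet_sq := (hsol.hasDerivAt_Nb_sq_sub_norm_Nx_sq hτ).fun_pow_of_proportional 2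
  exact (hN1_sq.fun_mul_of_proportional hdet_sq).congr_deriv (by simp only [Z2]; push_cast; ring)

/-- Along any solution of the tilted Bianchi type VIII system,
Z₂ = N₁²(N̄²−|N×|²)² is differentiable and Z₂' = 6q·Z₂. -/
theorem bianchiVIII_Z2_deriv (γ : ℝ) (hγ0 : 0 < γ) (hγ2 : γ < 2)
    (I : Set ℝ) (S : BianchiVIII γ I) (hsol : S.IsSolution) :
    ∀ τ ∈ I, HasDerivAt (Z2 S) (6 * S.q τ * Z2 S τ) τ :=
  bianchiVIII_Z2_deriv_general γ I S hsol
end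
end

section
/- Let 2/3 < γ < 2. The tilted Bianchi type VIII dynamical system has no equilibrium points in the type VIII region: there is no point (Σ₊, Σ×, Σ₁, N×, N̄, N₁, Ω, v₁, v) with N₁ < 0, N̄ > 0, N̄² − |N×|² > 0, Ω ≥ 0 and V² < 1 that satisfies all three constraints and at which all of the right-hand sides of the evolution equations vanish. -/
/-!
The Lorentzian form `N̄² − |N×|²` obeys `(N̄² − |N×|²)' = 2 (q + 2Σ₊)(N̄² − |N×|²)` and `N₁' = (q − 4Σ₊) N₁`,
so at an equilibrium with `N₁ ≠ 0` and `N̄² ≠ |N×|²` both rates vanish, forcing `Σ₊ = q = 0`.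
For `γ > 2/3` the deceleration parameter `q` is a sum of nonnegative terms, vanishing only when the shear
and `Ω` vanish. The `Σ×` equation then reduces to `N× (2N̄ − N₁) = 0`, so `N× = 0`, and the `Σ₊` equation
to `N₁ N̄ = 0`, which is impossible in the type VIII region.
-/

open ComplexConjugate

/-- Half the derivative of `N̄² − |N×|²` along `N×' = k N× + c S N̄`, `N̄' = k N̄ + c Re(S̄ N×)`. -/
lemma lorentz_form_rate (k c Nb : ℝ) (Nx S : ℂ) :
    Nb * (k * Nb + c * (conj S * Nx).re) - (conj Nx * ((k : ℂ) * Nx + (c : ℂ) * S * Nb)).re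
      = k * (Nb ^ 2 - ‖Nx‖ ^ 2) := by
  rw [Complex.sq_norm, Complex.normSq_apply]
  simp only [Complex.mul_re, Complex.mul_im, Complex.add_re, Complex.add_im, Complex.conj_re,
    Complex.conj_im, Complex.ofReal_re, Complex.ofReal_im]
  ring

lemma rate_eq_zero_of_stationary {k c Nb : ℝ} {Nx S : ℂ}
    (hNx : (k : ℂ) * Nx + (c : ℂ) * S * Nb = 0) (hNb : k * Nb + c * (conj S * Nx).re = 0)
    (hform : Nb ^ 2 - ‖Nx‖ ^ 2 ≠ 0) : k = 0 := by
  have h := lorentz_form_rate k c Nb Nx S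
  rw [hNx, hNb] at h
  simp only [mul_zero, Complex.zero_re, sub_zero] at h
  exact (mul_eq_zero.mp h.symm).resolve_right hform

section Deceleration

variable {γ V2 : ℝ}

lemma tilt_factor_pos (hγ : 0 ≤ γ) (hV0 : 0 ≤ V2) (hV : V2 < 1) : 0 < 1 + (γ - 1) * V2 := by
  nlinarith

/-- Positivity uses the decomposition `(3γ − 2)(1 − V²) + 2γV²`. -/
lemma density_coeff_pos (hγ : 2 / 3 < γ) (hV0 : 0 ≤ V2) (hV : V2 < 1) :
    0 < (3 * γ - 2) + (2 - γ) * V2 := by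
  nlinarith

lemma shear_eq_zero_and_density_eq_zero_of_q_eq_zero {Sig2 Om : ℝ}
    (hγ : 2 / 3 < γ) (hV0 : 0 ≤ V2) (hV : V2 < 1) (hSig : 0 ≤ Sig2) (hOm : 0 ≤ Om)
    (hq : 0 = 2 * Sig2 + (1 / 2) * ((3 * γ - 2) + (2 - γ) * V2) * Om / (1 + (γ - 1) * V2)) :
    Sig2 = 0 ∧ Om = 0 := by
  have hc := density_coeff_pos hγ hV0 hV
  have hG := tilt_factor_pos (γ := γ) (by linarith) hV0 hV
  have hdens : 0 ≤ (1 / 2) * ((3 * γ - 2) + (2 - γ) * V2) * Om / (1 + (γ - 1) * V2) := by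
    positivity
  refine ⟨by linarith, ?_⟩
  have h : (1 / 2) * ((3 * γ - 2) + (2 - γ) * V2) * Om / (1 + (γ - 1) * V2) = 0 := by linarith
  simpa [hc.ne', hG.ne'] using h

end Deceleration

lemma eq_zero_of_sq_add_sq_norm_eq_zero {E : Type*} [NormedAddCommGroup E] {a : ℝ} {x y : E}
    (h : a ^ 2 + ‖x‖ ^ 2 + ‖y‖ ^ 2 = 0) : x = 0 ∧ y = 0 := by
  constructor <;> rw [← norm_eq_zero] <;> nlinarith [sq_nonneg a, sq_nonneg ‖x‖, sq_nonneg ‖y‖]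

theorem bianchiVIII_no_equilibrium_general (γ : ℝ) (hγ1 : 2/3 < γ)
    (Sp Nb N1 Om v1 : ℝ) (Sx S1 Nx v : ℂ)
    (Sig2 V2 Gp q : ℝ) (R : ℂ)
    (hSig2 : Sig2 = Sp ^ 2 + ‖Sx‖ ^ 2 + ‖S1‖ ^ 2)
    (hV2 : V2 = v1 ^ 2 + ‖v‖ ^ 2)
    (hGp : Gp = 1 + (γ - 1) * V2)
    (hq : q = 2 * Sig2 + (1/2) * ((3*γ - 2) + (2 - γ) * V2) * Om / Gp)
    -- the type VIII region:
    (hN1 : N1 < 0) (hNb : 0 < Nb) (hVIII : 0 < Nb ^ 2 - ‖Nx‖ ^ 2)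
    (hOm : 0 ≤ Om) (hV : V2 < 1)
    -- vanishing of the right-hand sides of the evolution equations:
    (e1 : (q - 2) * Sp + 3 * ((starRingEnd ℂ) R * S1).re - N1 * Nb
        - 2 * ‖Nx‖ ^ 2 + γ * Om / (2 * Gp) * (-2 * v1 ^ 2 + ‖v‖ ^ 2) = 0)
    (e2 : ((q - 2 : ℝ) : ℂ) * Sx + (Real.sqrt 3 : ℂ) * S1 * R
        - (Real.sqrt 3 : ℂ) * Nx * ((2 * Nb - N1 : ℝ) : ℂ)
        + ((Real.sqrt 3 * γ * Om / (2 * Gp) : ℝ) : ℂ) * v ^ 2 = 0)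
    (e4 : ((q + 2 * Sp : ℝ) : ℂ) * Nx + ((2 * Real.sqrt 3 : ℝ) : ℂ) * Sx * (Nb : ℂ) = 0)
    (e5 : (q + 2 * Sp) * Nb + 2 * Real.sqrt 3 * ((starRingEnd ℂ) Sx * Nx).re = 0)
    (e6 : (q - 4 * Sp) * N1 = 0) :
    False := by
  have hN1rate : q - 4 * Sp = 0 := (mul_eq_zero.mp e6).resolve_right hN1.ne
  have hNrate : q + 2 * Sp = 0 := rate_eq_zero_of_stationary e4 e5 hVIII.ne'
  have hq0 : q = 0 := by linarith
  have hSp : Sp = 0 := by linarith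
  have hV0 : 0 ≤ V2 := hV2 ▸ by positivity
  obtain ⟨hSig0, hOm0⟩ := shear_eq_zero_and_density_eq_zero_of_q_eq_zero hγ1 hV0 hV
    (hSig2 ▸ by positivity) hOm (hq0 ▸ hGp ▸ hq)
  obtain ⟨hSx, hS1⟩ := eq_zero_of_sq_add_sq_norm_eq_zero (hSig2 ▸ hSig0)
  have hNx : Nx = 0 := by
    have h2Nb : (2 * Nb - N1 : ℂ) ≠ 0 := by exact_mod_cast (by linarith : 0 < 2 * Nb - N1).ne'
    simpa [hSx, hS1, hOm0, h2Nb] using e2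
  simp [hSp, hS1, hOm0, hNx, hN1.ne, hNb.ne'] at e1

/-- For 2/3 < γ < 2, the tilted Bianchi type VIII dynamical system
has no equilibrium points in the type VIII region: there is no point with
N₁ < 0, N̄ > 0, N̄² − |N×|² > 0, Ω ≥ 0 and V² < 1 satisfying the three
constraints at which all right-hand sides of the evolution equations vanish. -/
theorem bianchiVIII_no_equilibrium (γ : ℝ) (hγ1 : 2/3 < γ) (hγ2 : γ < 2)
    (Sp Nb N1 Om v1 : ℝ) (Sx S1 Nx v : ℂ)
    (Sig2 V2 Gp q W T aa : ℝ) (bb R : ℂ)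
    (hSig2 : Sig2 = Sp ^ 2 + ‖Sx‖ ^ 2 + ‖S1‖ ^ 2)
    (hV2 : V2 = v1 ^ 2 + ‖v‖ ^ 2)
    (hGp : Gp = 1 + (γ - 1) * V2)
    (hq : q = 2 * Sig2 + (1/2) * ((3*γ - 2) + (2 - γ) * V2) * Om / Gp)
    (hW : W = Sp * (-2 * v1 ^ 2 + ‖v‖ ^ 2)
        + 2 * Real.sqrt 3 * v1 * ((starRingEnd ℂ) S1 * v).re
        + Real.sqrt 3 * (Sx * ((starRingEnd ℂ) v) ^ 2).re)
    (hT : T = ((3*γ - 4) * (1 - V2) + (2 - γ) * W) / (1 - (γ - 1) * V2))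
    (ha : aa = (Nb ^ 2 - N1 ^ 2 - ‖Nx‖ ^ 2) /
        ((Nb - N1) ^ 2 - ‖Nx‖ ^ 2))
    (hb : bb = ((-2 * N1 : ℝ) : ℂ) * Nx /
        (((Nb - N1) ^ 2 - ‖Nx‖ ^ 2 : ℝ) : ℂ))
    (hR : R = (aa : ℂ) * S1 + bb * (starRingEnd ℂ) S1)
    -- the type VIII region:
    (hN1 : N1 < 0) (hNb : 0 < Nb) (hVIII : 0 < Nb ^ 2 - ‖Nx‖ ^ 2)
    (hOm : 0 ≤ Om) (hV : V2 < 1)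
    -- the constraints:
    (c1 : 1 = Sig2 + (1/4) * N1 ^ 2 - N1 * Nb + ‖Nx‖ ^ 2 + Om)
    (c2 : 0 = 2 * ((starRingEnd ℂ) Sx * Nx).im + γ * Om * v1 / Gp)
    (c3 : (0 : ℂ) = Complex.I * S1 * ((Nb - N1 : ℝ) : ℂ)
        + Complex.I * (starRingEnd ℂ) S1 * Nx + ((γ * Om / Gp : ℝ) : ℂ) * v)
    -- vanishing of the right-hand sides of the evolution equations:
    (e1 : (q - 2) * Sp + 3 * ((starRingEnd ℂ) R * S1).re - N1 * Nb
        - 2 * ‖Nx‖ ^ 2 + γ * Om / (2 * Gp) * (-2 * v1 ^ 2 + ‖v‖ ^ 2) = 0)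
    (e2 : ((q - 2 : ℝ) : ℂ) * Sx + (Real.sqrt 3 : ℂ) * S1 * R
        - (Real.sqrt 3 : ℂ) * Nx * ((2 * Nb - N1 : ℝ) : ℂ)
        + ((Real.sqrt 3 * γ * Om / (2 * Gp) : ℝ) : ℂ) * v ^ 2 = 0)
    (e3 : ((q - 2 : ℝ) : ℂ) * S1 - ((3 * Sp : ℝ) : ℂ) * R
        - (Real.sqrt 3 : ℂ) * Sx * (starRingEnd ℂ) R
        + ((Real.sqrt 3 * γ * Om * v1 / Gp : ℝ) : ℂ) * v = 0)
    (e4 : ((q + 2 * Sp : ℝ) : ℂ) * Nx + ((2 * Real.sqrt 3 : ℝ) : ℂ) * Sx * (Nb : ℂ) = 0)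
    (e5 : (q + 2 * Sp) * Nb + 2 * Real.sqrt 3 * ((starRingEnd ℂ) Sx * Nx).re = 0)
    (e6 : (q - 4 * Sp) * N1 = 0)
    (e7 : Om / Gp * (2 * q - (3*γ - 2) + (2 * q * (γ - 1) - (2 - γ)) * V2 - γ * W) = 0)
    (e8 : (T + 2 * Sp) * v1 - Real.sqrt 3 * ((R + S1) * (starRingEnd ℂ) v).re
        + Real.sqrt 3 * ((starRingEnd ℂ) Nx * v ^ 2).im = 0)
    (e9 : (((T - Sp : ℝ) : ℂ)
          - Complex.I * (Real.sqrt 3 : ℂ) * ((Nb - N1 : ℝ) : ℂ) * (v1 : ℂ)) * v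
        - (Real.sqrt 3 : ℂ) * (Sx + Complex.I * Nx * (v1 : ℂ)) * (starRingEnd ℂ) v
        - (Real.sqrt 3 : ℂ) * (S1 - R) * (v1 : ℂ) = 0) :
    False :=
  bianchiVIII_no_equilibrium_general γ hγ1 Sp Nb N1 Om v1 Sx S1 Nx v Sig2 V2 Gp q R hSig2 hV2 hGp hq
    hN1 hNb hVIII hOm hV e1 e2 e4 e5 e6
end

section
/- Let N₁, N̄ be real numbers and N× a complex number with N₁ < 0, N̄ > 0 and N̄² − |N×|² > 0. Define a = (N̄² − N₁² − |N×|²)/((N̄−N₁)² − |N×|²) and b = −2N₁N×/((N̄−N₁)² − |N×|²). Then (N̄−N₁)² − |N×|² > 0, |a| ≤ 1 and |b| ≤ 1. -/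
/-!
Write `x = ‖N×‖` and `D = (N̄ - N₁)² - x²`. The hypotheses give `0 ≤ x < N̄ < N̄ - N₁`, so `D > 0`,
and the three bounds are the identities
`D - (N̄² - N₁² - x²) = 2N₁(N₁ - N̄)`, `D + (N̄² - N₁² - x²) = 2(N̄² - x²) - 2N₁N̄` and
`D + 2N₁x = (N̄ - N₁)² - (x - N₁)² + N₁²`, whose right-hand sides are nonnegative.
-/

namespace BianchiVIII

variable {N1 Nb x : ℝ}

lemma lt_of_sq_sub_sq_pos (hNb : 0 < Nb) (h : 0 < Nb ^ 2 - x ^ 2) : x < Nb :=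
  lt_of_pow_lt_pow_left₀ 2 hNb.le (by linarith)

lemma denom_pos (hN1 : N1 ≤ 0) (hx : 0 ≤ x) (hxNb : x < Nb) : 0 < (Nb - N1) ^ 2 - x ^ 2 := by
  have : x ^ 2 < (Nb - N1) ^ 2 := pow_lt_pow_left₀ (by linarith) hx two_ne_zero
  linarith

lemma abs_a_le_one (hN1 : N1 ≤ 0) (hx : 0 ≤ x) (hxNb : x < Nb) :
    |(Nb ^ 2 - N1 ^ 2 - x ^ 2) / ((Nb - N1) ^ 2 - x ^ 2)| ≤ 1 := by
  have hD := denom_pos hN1 hx hxNb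
  rw [abs_div, abs_of_pos hD, div_le_one hD, abs_le]
  constructor <;> nlinarith

lemma abs_b_le_one (hN1 : N1 ≤ 0) (hx : 0 ≤ x) (hxNb : x < Nb) :
    |-2 * N1 * x / ((Nb - N1) ^ 2 - x ^ 2)| ≤ 1 := by
  have hD := denom_pos hN1 hx hxNb
  have hb : 0 ≤ -2 * N1 * x := by nlinarith
  rw [abs_div, abs_of_nonneg hb, abs_of_pos hD, div_le_one hD]
  have : (x - N1) ^ 2 < (Nb - N1) ^ 2 := pow_lt_pow_left₀ (by linarith) (by linarith) two_ne_zero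
  nlinarith

end BianchiVIII

open BianchiVIII in
/-- For N₁ < 0, N̄ > 0 and N̄² − |N×|² > 0, the denominator
(N̄−N₁)² − |N×|² is positive and the coefficients
a = (N̄²−N₁²−|N×|²)/((N̄−N₁)²−|N×|²) and b = −2N₁N×/((N̄−N₁)²−|N×|²)
satisfy |a| ≤ 1 and |b| ≤ 1. -/
theorem bianchiVIII_a_b_bounded (N1 Nb : ℝ) (Nx : ℂ)
    (h1 : N1 < 0) (h2 : 0 < Nb) (h3 : 0 < Nb ^ 2 - ‖Nx‖ ^ 2) :
    0 < (Nb - N1) ^ 2 - ‖Nx‖ ^ 2 ∧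
    |(Nb ^ 2 - N1 ^ 2 - ‖Nx‖ ^ 2) /
        ((Nb - N1) ^ 2 - ‖Nx‖ ^ 2)| ≤ 1 ∧
    ‖((-2 * N1 : ℝ) : ℂ) * Nx /
        (((Nb - N1) ^ 2 - ‖Nx‖ ^ 2 : ℝ) : ℂ)‖ ≤ 1 := by
  have hx := norm_nonneg Nx
  have hxNb := lt_of_sq_sub_sq_pos h2 h3
  refine ⟨denom_pos h1.le hx hxNb, abs_a_le_one h1.le hx hxNb, ?_⟩
  have hb := abs_b_le_one h1.le hx hxNb
  rwa [norm_div, norm_mul, Complex.norm_real, Complex.norm_real, Real.norm_eq_abs,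
    Real.norm_eq_abs, ← abs_norm Nx, ← abs_mul, ← abs_div, abs_norm]
end
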